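/- arXiv:2411.00633 — 3 statements merged into one kernel-verified Lean document; each statement's English description precedes it below -/
import Mathlib

section
/- Under Assumption (A1), define 𝒥(x,μ,m) := inf_{a∈A} ( L(x,a,μ)δ + ∫_{ℝ^d} G(x + b(x,a,μ)δ + z, m) m_Z(dz) ) for (x,μ,m) ∈ ℝ^d × P_p(ℝ^d) × P_p(ℝ^d), where m_Z is the law of Z. Then there exists a unique function a*: ℝ^d × P_p(ℝ^d) × P_p(ℝ^d) → A such that for every (x,μ,m) the infimum defining 𝒥(x,μ,m) is attained at a*(x,μ,m), and the map a* is continuous on ℝ^d × P_p(ℝ^d,K) × P_p(ℝ^d,K). -/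
open MeasureTheory ProbabilityTheory Filter
open Topology
open scoped ENNReal NNReal BigOperators RealInnerProductSpace

set_option maxHeartbeats 1000000

noncomputable section

abbrev Vec (d : ℕ) := EuclideanSpace ℝ (Fin d)

namespace MFG

variable {d : ℕ}

/-- Borel probability measure with finite `p`-th moment. -/
def MemPp (p : ℝ) (μ : Measure (Vec d)) : Prop :=
  IsProbabilityMeasure μ ∧ Integrable (fun x => ‖x‖ ^ p) μ

/-- `p`-th moment `∫ |x|^p dμ`. -/
def mom (p : ℝ) (μ : Measure (Vec d)) : ℝ := ∫ x, ‖x‖ ^ p ∂μ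

def IsCoupling (π : Measure (Vec d × Vec d)) (μ ν : Measure (Vec d)) : Prop :=
  IsProbabilityMeasure π ∧ π.map Prod.fst = μ ∧ π.map Prod.snd = ν

/-- Wasserstein-1 distance, as the infimum of the expected distance over couplings. -/
def W1 (μ ν : Measure (Vec d)) : ℝ :=
  sInf {r | ∃ π : Measure (Vec d × Vec d), IsCoupling π μ ν ∧ r = ∫ z, dist z.1 z.2 ∂π}

end MFG

lemma W1_nonneg {d : ℕ} (μ ν : Measure (Vec d)) : 0 ≤ MFG.W1 μ ν :=
  Real.sInf_nonneg (by rintro r ⟨π, hπ, rfl⟩; exact integral_nonneg fun z => dist_nonneg)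

lemma W1_self {d : ℕ} (m : Measure (Vec d)) (hm : IsProbabilityMeasure m) : MFG.W1 m m = 0 := by
  have hdiag : Measurable (fun z : Vec d => (z, z)) := measurable_id.prodMk measurable_id
  have hmem : (0:ℝ) ∈ {r | ∃ π : Measure (Vec d × Vec d), MFG.IsCoupling π m m ∧ r = ∫ z, dist z.1 z.2 ∂π} := by
    refine ⟨m.map (fun z => (z, z)), ⟨?_, ?_, ?_⟩, ?_⟩
    · exact Measure.isProbabilityMeasure_map hdiag.aemeasurable
    · rw [Measure.map_map measurable_fst hdiag]
      have : (Prod.fst ∘ fun z : Vec d => (z, z)) = id := rfl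
      rw [this, Measure.map_id]
    · rw [Measure.map_map measurable_snd hdiag]
      have : (Prod.snd ∘ fun z : Vec d => (z, z)) = id := rfl
      rw [this, Measure.map_id]
    · rw [integral_map hdiag.aemeasurable continuous_dist.aestronglyMeasurable]
      simp
  refine le_antisymm (csInf_le ⟨0, ?_⟩ hmem) (Real.sInf_nonneg ?_)
  · rintro r ⟨π, hπ, rfl⟩; exact integral_nonneg fun z => dist_nonneg
  · rintro r ⟨π, hπ, rfl⟩; exact integral_nonneg fun z => dist_nonneg

lemma rpow_le_one_add_rpow {t r s : ℝ} (ht : 0 ≤ t) (hr : 0 ≤ r) (hrs : r ≤ s) :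
    t ^ r ≤ 1 + t ^ s := by
  rcases le_total t 1 with h | h
  · have h1 := Real.rpow_le_one ht h hr
    have h2 : (0:ℝ) ≤ t ^ s := Real.rpow_nonneg ht s
    linarith
  · have h1 := Real.rpow_le_rpow_of_exponent_le h hrs
    linarith

lemma add_rpow_le_two_rpow {s t r : ℝ} (hs : 0 ≤ s) (ht : 0 ≤ t) (hr : 0 ≤ r) :
    (s + t) ^ r ≤ 2 ^ r * (s ^ r + t ^ r) := by
  have h1 : s + t ≤ 2 * max s t := by
    rcases le_total s t with h | h
    · rw [max_eq_right h]; linarith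
    · rw [max_eq_left h]; linarith
  have h2 : (s + t) ^ r ≤ (2 * max s t) ^ r :=
    Real.rpow_le_rpow (by linarith) h1 hr
  rw [Real.mul_rpow (by norm_num) (le_max_iff.2 (Or.inl hs))] at h2
  have h3 : (max s t) ^ r ≤ s ^ r + t ^ r := by
    rcases max_cases s t with ⟨he, _⟩ | ⟨he, _⟩ <;> rw [he]
    · linarith [Real.rpow_nonneg ht r]
    · linarith [Real.rpow_nonneg hs r]
  calc (s + t) ^ r ≤ 2 ^ r * (max s t) ^ r := h2
    _ ≤ 2 ^ r * (s ^ r + t ^ r) :=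
        mul_le_mul_of_nonneg_left h3 (Real.rpow_nonneg (by norm_num) r)

lemma mom_r_le {d : ℕ} {m : Measure (Vec d)} (hm : IsProbabilityMeasure m) {pp r : ℝ}
    (hr : 0 ≤ r) (hrp : r ≤ pp) (hint : Integrable (fun z => ‖z‖ ^ pp) m) :
    Integrable (fun z : Vec d => ‖z‖ ^ r) m ∧ MFG.mom r m ≤ 1 + MFG.mom pp m := by
  have hmeas : AEStronglyMeasurable (fun z : Vec d => ‖z‖ ^ r) m :=
    (continuous_norm.rpow_const (fun z => Or.inr hr)).aestronglyMeasurable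
  have hdom : ∀ z : Vec d, ‖z‖ ^ r ≤ 1 + ‖z‖ ^ pp :=
    fun z => rpow_le_one_add_rpow (norm_nonneg z) hr hrp
  have hint1 : Integrable (fun z : Vec d => 1 + ‖z‖ ^ pp) m := (integrable_const 1).add hint
  have hI : Integrable (fun z : Vec d => ‖z‖ ^ r) m := by
    refine hint1.mono hmeas (ae_of_all _ fun z => ?_)
    rw [Real.norm_eq_abs, abs_of_nonneg (Real.rpow_nonneg (norm_nonneg z) r),
      Real.norm_eq_abs, abs_of_nonneg (by positivity)]
    exact hdom z
  refine ⟨hI, ?_⟩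
  have : ∫ z, ‖z‖ ^ r ∂m ≤ ∫ z, (1 + ‖z‖ ^ pp) ∂m := integral_mono hI hint1 hdom
  rw [integral_add (integrable_const 1) hint, integral_const] at this
  simpa [MFG.mom, measure_univ] using this

/-- Lemma 2.3. Under Assumption (A1), the static optimization problem
`𝒥(x,μ,m) = inf_{a ∈ A} ( L(x,a,μ)δ + ∫ G(x + b(x,a,μ)δ + z, m) m_Z(dz) )` admits a unique
minimizer `a*(x,μ,m)` for every `(x,μ,m)`, the minimizing function `a*` is unique, and it is
continuous on `ℝ^d × P_p(ℝ^d,K) × P_p(ℝ^d,K)`. -/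
theorem single_period_optimizer_exists_unique_continuous
    {d : ℕ} {Ω : Type*} [MeasurableSpace Ω] (P : Measure Ω) [IsProbabilityMeasure P]
    (p q δ : ℝ) (hp : 1 < p) (hq1 : 1 ≤ q) (hqp : q ≤ p) (hδ : 0 < δ)
    (A : Set (Vec d)) (hA_closed : IsClosed A) (hA_conv : Convex ℝ A) (hA0 : (0 : Vec d) ∈ A)
    (b : Vec d → Vec d → Measure (Vec d) → Vec d)
    (L : Vec d → Vec d → Measure (Vec d) → ℝ)
    (G : Vec d → Measure (Vec d) → ℝ)
    (ξ Z : Ω → Vec d) (hξmeas : Measurable ξ) (hZmeas : Measurable Z)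
    (hindep : IndepFun ξ Z P)
    (hξp : Integrable (fun ω => ‖ξ ω‖ ^ p) P) (hZp : Integrable (fun ω => ‖Z ω‖ ^ p) P)
    (Cb CG CL cL CJ K : ℝ) (hCb : 1 ≤ Cb) (hCG : 0 ≤ CG) (hCL : 0 ≤ CL) (hcL : 0 < cL)
    (hCJ : CJ = 2 * max CL (max ((16 : ℝ) ^ q * Cb) 1) *
      (1 + (∫ ω, ‖ξ ω‖ ^ q ∂P) + ∫ ω, ‖Z ω‖ ^ q ∂P))
    (hK : K = 4 ^ p * (2 + (∫ ω, ‖ξ ω‖ ^ p ∂P) + (CJ + CG) / (cL * δ) + ∫ ω, ‖Z ω‖ ^ p ∂P))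
    -- Assumption (A1)(i): continuity of b on ℝ^d × A × P_p(ℝ^d, K) and linear growth
    (hb_cont : ∀ x a μ, a ∈ A → MFG.MemPp p μ → MFG.mom p μ ≤ K → ∀ ε > 0, ∃ η > 0,
      ∀ x' a' μ', a' ∈ A → MFG.MemPp p μ' → MFG.mom p μ' ≤ K →
        dist x x' + dist a a' + MFG.W1 μ μ' < η → ‖b x a μ - b x' a' μ'‖ < ε)
    (hb_growth : ∀ x a μ, a ∈ A → MFG.MemPp p μ →
      ‖b x a μ‖ ≤ Cb * (1 + ‖x‖ + ‖a‖ + MFG.mom 1 μ))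
    -- Assumption (A1)(ii): continuity and growth of L and G
    (hL_cont : ∀ x a μ, a ∈ A → MFG.MemPp p μ → MFG.mom p μ ≤ K → ∀ ε > 0, ∃ η > 0,
      ∀ x' a' μ', a' ∈ A → MFG.MemPp p μ' → MFG.mom p μ' ≤ K →
        dist x x' + dist a a' + MFG.W1 μ μ' < η → |L x a μ - L x' a' μ'| < ε)
    (hG_cont : ∀ x μ, MFG.MemPp p μ → MFG.mom p μ ≤ K → ∀ ε > 0, ∃ η > 0,
      ∀ x' μ', MFG.MemPp p μ' → MFG.mom p μ' ≤ K →
        dist x x' + MFG.W1 μ μ' < η → |G x μ - G x' μ'| < ε)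
    (hG_bound : ∀ x μ, MFG.MemPp p μ → -CG ≤ G x μ ∧ G x μ ≤ CG * (1 + ‖x‖ ^ q))
    (hL_lower : ∀ x a μ, a ∈ A → MFG.MemPp p μ → cL * (‖a‖ ^ p - 1) ≤ L x a μ)
    (hL_zero : ∀ x μ, MFG.MemPp p μ → L x 0 μ ≤ CL * (1 + ‖x‖ ^ q + MFG.mom q μ))
    -- Assumption (A1)(iii): unique minimizer of the static problem
    (hmin : ∀ x μ m, MFG.MemPp p μ → MFG.MemPp p m →
      ∃! a, a ∈ A ∧ ∀ a' ∈ A,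
        L x a μ * δ + (∫ ω, G (x + δ • b x a μ + Z ω) m ∂P) ≤
          L x a' μ * δ + ∫ ω, G (x + δ • b x a' μ + Z ω) m ∂P) :
    ∃ astar : Vec d → Measure (Vec d) → Measure (Vec d) → Vec d,
      -- `a*(x,μ,m)` attains the infimum defining `𝒥(x,μ,m)`
      (∀ x μ m, MFG.MemPp p μ → MFG.MemPp p m →
        astar x μ m ∈ A ∧ ∀ a' ∈ A,
          L x (astar x μ m) μ * δ + (∫ ω, G (x + δ • b x (astar x μ m) μ + Z ω) m ∂P) ≤
            L x a' μ * δ + ∫ ω, G (x + δ • b x a' μ + Z ω) m ∂P) ∧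
      -- `a*` is the unique such function
      (∀ astar' : Vec d → Measure (Vec d) → Measure (Vec d) → Vec d,
        (∀ x μ m, MFG.MemPp p μ → MFG.MemPp p m →
          astar' x μ m ∈ A ∧ ∀ a' ∈ A,
            L x (astar' x μ m) μ * δ + (∫ ω, G (x + δ • b x (astar' x μ m) μ + Z ω) m ∂P) ≤
              L x a' μ * δ + ∫ ω, G (x + δ • b x a' μ + Z ω) m ∂P) →
        ∀ x μ m, MFG.MemPp p μ → MFG.MemPp p m → astar' x μ m = astar x μ m) ∧
      -- `a*` is continuous on ℝ^d × P_p(ℝ^d,K) × P_p(ℝ^d,K)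
      (∀ x μ m, MFG.MemPp p μ → MFG.mom p μ ≤ K → MFG.MemPp p m → MFG.mom p m ≤ K →
        ∀ ε > 0, ∃ η > 0, ∀ x' μ' m',
          MFG.MemPp p μ' → MFG.mom p μ' ≤ K → MFG.MemPp p m' → MFG.mom p m' ≤ K →
          dist x x' + MFG.W1 μ μ' + MFG.W1 m m' < η →
          ‖astar x μ m - astar x' μ' m'‖ < ε) := by
    classical
  have hq0 : (0:ℝ) ≤ q := by linarith
  have h2q : (0:ℝ) ≤ 2 ^ q := Real.rpow_nonneg (by norm_num) q
  have hsel : ∀ x μ m, ∃ a : Vec d, MFG.MemPp p μ → MFG.MemPp p m →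
      a ∈ A ∧ ∀ a' ∈ A,
        L x a μ * δ + (∫ ω, G (x + δ • b x a μ + Z ω) m ∂P) ≤
          L x a' μ * δ + ∫ ω, G (x + δ • b x a' μ + Z ω) m ∂P := by
    intro x μ m
    by_cases h1 : MFG.MemPp p μ
    · by_cases h2 : MFG.MemPp p m
      · obtain ⟨a, ha, -⟩ := hmin x μ m h1 h2
        exact ⟨a, fun _ _ => ha⟩
      · exact ⟨0, fun _ h => absurd h h2⟩
    · exact ⟨0, fun h _ => absurd h h1⟩
  choose astar hastar using hsel
  refine ⟨astar, fun x μ m h1 h2 => hastar x μ m h1 h2, ?_, ?_⟩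
  · intro astar' h' x μ m h1 h2
    obtain ⟨a0, -, hu⟩ := hmin x μ m h1 h2
    rw [hu _ (h' x μ m h1 h2), hu _ (hastar x μ m h1 h2)]
  -- Continuity
  intro x μ m hμ hμK hm hmK ε hε
  by_contra hcon
  push_neg at hcon
  have hcon' : ∀ n : ℕ, ∃ x' μ' m', MFG.MemPp p μ' ∧ MFG.mom p μ' ≤ K ∧ MFG.MemPp p m' ∧
      MFG.mom p m' ≤ K ∧ dist x x' + MFG.W1 μ μ' + MFG.W1 m m' < 1/(n+1) ∧
      ε ≤ ‖astar x μ m - astar x' μ' m'‖ := fun n => hcon (1/(n+1)) (by positivity)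
  choose xs μs ms hμs hμsK hms hmsK hdists hfar using hcon'
  -- basic bounds on G
  have hGabs : ∀ (y : Vec d) (m' : Measure (Vec d)), MFG.MemPp p m' →
      |G y m'| ≤ CG * (1 + ‖y‖ ^ q) := by
    intro y m' hm'
    obtain ⟨hl, hu⟩ := hG_bound y m' hm'
    have hq' : (0:ℝ) ≤ ‖y‖ ^ q := Real.rpow_nonneg (norm_nonneg y) q
    rw [abs_le]
    exact ⟨by nlinarith, hu⟩
  have hGcont' : ∀ m' : Measure (Vec d), MFG.MemPp p m' → MFG.mom p m' ≤ K →
      Continuous fun y => G y m' := by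
    intro m' hm' hK'
    rw [Metric.continuous_iff]
    intro y ε' hε'
    obtain ⟨η, hη, hcl⟩ := hG_cont y m' hm' hK' ε' hε'
    refine ⟨η, hη, fun y' hy' => ?_⟩
    have hw : MFG.W1 m' m' = 0 := W1_self m' hm'.1
    have h := hcl y' m' hm' hK' (by rw [hw, add_zero, dist_comm]; exact hy')
    rw [Real.dist_eq, abs_sub_comm]
    exact h
  have hGptbd : ∀ (c : ℝ) (v : Vec d) (m' : Measure (Vec d)), 0 ≤ c → ‖v‖ ≤ c →
      MFG.MemPp p m' → ∀ ω, |G (v + Z ω) m'| ≤ CG * (1 + 2 ^ q * (c ^ q + (1 + ‖Z ω‖ ^ p))) := by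
    intro c v m' hc hvc hm' ω
    have h1 := hGabs (v + Z ω) m' hm'
    have h2 : ‖v + Z ω‖ ^ q ≤ (c + ‖Z ω‖) ^ q :=
      Real.rpow_le_rpow (norm_nonneg _) (le_trans (norm_add_le _ _) (by linarith)) hq0
    have h3 := add_rpow_le_two_rpow hc (norm_nonneg (Z ω)) hq0
    have h4 : ‖Z ω‖ ^ q ≤ 1 + ‖Z ω‖ ^ p := rpow_le_one_add_rpow (norm_nonneg _) hq0 hqp
    have h5 : ‖v + Z ω‖ ^ q ≤ 2 ^ q * (c ^ q + (1 + ‖Z ω‖ ^ p)) := by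
      refine h2.trans (h3.trans ?_)
      exact mul_le_mul_of_nonneg_left (by linarith) h2q
    calc |G (v + Z ω) m'| ≤ CG * (1 + ‖v + Z ω‖ ^ q) := h1
      _ ≤ _ := mul_le_mul_of_nonneg_left (by linarith) hCG
  have hbd_int : ∀ c : ℝ,
      Integrable (fun ω => CG * (1 + 2 ^ q * (c ^ q + (1 + ‖Z ω‖ ^ p)))) P :=
    fun c => ((integrable_const 1).add
      ((((integrable_const (c ^ q)).add ((integrable_const 1).add hZp))).const_mul
        (2 ^ q))).const_mul CG
  have hGint : ∀ (v : Vec d) (m' : Measure (Vec d)), MFG.MemPp p m' → MFG.mom p m' ≤ K →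
      Integrable (fun ω => G (v + Z ω) m') P := by
    intro v m' hm' hK'
    refine (hbd_int ‖v‖).mono (((hGcont' m' hm' hK').measurable.comp
      (measurable_const.add hZmeas)).aestronglyMeasurable) (ae_of_all _ fun ω => ?_)
    simp only [Real.norm_eq_abs]
    exact (hGptbd ‖v‖ v m' (norm_nonneg v) le_rfl hm' ω).trans (le_abs_self _)
  have hIbd : ∀ c : ℝ, (∫ ω, CG * (1 + 2 ^ q * (c ^ q + (1 + ‖Z ω‖ ^ p))) ∂P) =
      CG * (1 + 2 ^ q * (c ^ q + (1 + ∫ ω, ‖Z ω‖ ^ p ∂P))) := by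
    intro c
    have i1 : Integrable (fun ω => (1:ℝ) + ‖Z ω‖ ^ p) P := (integrable_const 1).add hZp
    have i2 : Integrable (fun ω : Ω => c ^ q + (1 + ‖Z ω‖ ^ p)) P := (integrable_const _).add i1
    have i3 : Integrable (fun ω : Ω => (2:ℝ) ^ q * (c ^ q + (1 + ‖Z ω‖ ^ p))) P := i2.const_mul _
    rw [integral_const_mul, integral_add (integrable_const 1) i3, integral_const_mul,
      integral_add (integrable_const (c ^ q)) i1, integral_add (integrable_const 1) hZp]
    simp [measure_univ]
  have hInt_lb : ∀ (v : Vec d) (m' : Measure (Vec d)), MFG.MemPp p m' → MFG.mom p m' ≤ K →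
      -CG ≤ ∫ ω, G (v + Z ω) m' ∂P := by
    intro v m' hm' hK'
    have h := integral_mono (integrable_const (-CG)) (hGint v m' hm' hK')
      (fun ω => (hG_bound (v + Z ω) m' hm').1)
    simpa [measure_univ] using h
  have hInt_ub : ∀ (c : ℝ) (v : Vec d) (m' : Measure (Vec d)), 0 ≤ c → ‖v‖ ≤ c →
      MFG.MemPp p m' → MFG.mom p m' ≤ K →
      (∫ ω, G (v + Z ω) m' ∂P) ≤ CG * (1 + 2 ^ q * (c ^ q + (1 + ∫ ω, ‖Z ω‖ ^ p ∂P))) := by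
    intro c v m' hc hvc hm' hK'
    rw [← hIbd c]
    exact integral_mono (hGint v m' hm' hK') (hbd_int c)
      (fun ω => (le_abs_self _).trans (hGptbd c v m' hc hvc hm' ω))
  -- componentwise distance bounds
  have hcomp : ∀ n : ℕ, dist x (xs n) ≤ 1/(n+1) ∧ MFG.W1 μ (μs n) ≤ 1/(n+1) ∧
      MFG.W1 m (ms n) ≤ 1/(n+1) := by
    intro n
    have h := hdists n
    have w1 := W1_nonneg μ (μs n)
    have w2 := W1_nonneg m (ms n)
    have d0 : (0:ℝ) ≤ dist x (xs n) := dist_nonneg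
    exact ⟨by linarith, by linarith, by linarith⟩
  have hone : ∀ n : ℕ, (1:ℝ)/(n+1) ≤ 1 := by
    intro n
    rw [div_le_one (by positivity)]
    have h : (0:ℝ) ≤ (n:ℝ) := Nat.cast_nonneg n
    linarith
  have hxsb : ∀ n, ‖xs n‖ ≤ ‖x‖ + 1 := by
    intro n
    have h1 : ‖xs n‖ ≤ ‖x‖ + dist x (xs n) := by
      have h := dist_triangle (xs n) x 0
      rw [dist_zero_right, dist_zero_right, dist_comm (xs n) x] at h
      linarith
    have h2 := (hcomp n).1
    have h3 := hone n
    linarith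
  have hK0 : (0:ℝ) ≤ K :=
    le_trans (show (0:ℝ) ≤ MFG.mom p μ from
      integral_nonneg fun z => Real.rpow_nonneg (norm_nonneg z) p) hμK
  have hmomq : ∀ n, MFG.mom q (μs n) ≤ 1 + K := by
    intro n
    have h := (mom_r_le (hμs n).1 hq0 hqp (hμs n).2).2
    have h2 := hμsK n
    linarith
  have hmom1 : ∀ n, MFG.mom 1 (μs n) ≤ 1 + K := by
    intro n
    have h := (mom_r_le (hμs n).1 (by norm_num) hp.le (hμs n).2).2
    have h2 := hμsK n
    linarith
  -- uniform bound on drift at a = 0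
  have hc0nn : (0:ℝ) ≤ (‖x‖ + 1) + δ * (Cb * (3 + ‖x‖ + K)) := by
    have h1 : (0:ℝ) ≤ Cb := by linarith
    have h2 : (0:ℝ) ≤ 3 + ‖x‖ + K := by linarith [norm_nonneg x]
    have h3 : (0:ℝ) ≤ δ * (Cb * (3 + ‖x‖ + K)) := mul_nonneg hδ.le (mul_nonneg h1 h2)
    linarith [norm_nonneg x]
  have hvbd : ∀ n, ‖xs n + δ • b (xs n) 0 (μs n)‖ ≤ (‖x‖ + 1) + δ * (Cb * (3 + ‖x‖ + K)) := by
    intro n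
    have hb := hb_growth (xs n) 0 (μs n) hA0 (hμs n)
    rw [norm_zero] at hb
    have hm1 := hmom1 n
    have hmom1nn : (0:ℝ) ≤ MFG.mom 1 (μs n) :=
      integral_nonneg fun z => Real.rpow_nonneg (norm_nonneg z) 1
    have hxb := hxsb n
    have h1 : ‖δ • b (xs n) 0 (μs n)‖ = δ * ‖b (xs n) 0 (μs n)‖ := by
      rw [norm_smul, Real.norm_eq_abs, abs_of_pos hδ]
    have h2 : ‖b (xs n) 0 (μs n)‖ ≤ Cb * (3 + ‖x‖ + K) := by
      refine hb.trans ?_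
      have hCb0 : (0:ℝ) ≤ Cb := by linarith
      nlinarith
    calc ‖xs n + δ • b (xs n) 0 (μs n)‖ ≤ ‖xs n‖ + ‖δ • b (xs n) 0 (μs n)‖ := norm_add_le _ _
      _ ≤ _ := by
          rw [h1]
          have h3 := mul_le_mul_of_nonneg_left h2 hδ.le
          linarith
  have hanA : ∀ n, astar (xs n) (μs n) (ms n) ∈ A :=
    fun n => (hastar _ _ _ (hμs n) (hms n)).1
  have hanmin := fun n => (hastar (xs n) (μs n) (ms n) (hμs n) (hms n)).2
  -- key coercivity bound
  have hkey : ∀ n, cL * (‖astar (xs n) (μs n) (ms n)‖ ^ p - 1) * δ - CG ≤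
      CL * (1 + (‖x‖ + 1) ^ q + (1 + K)) * δ +
      CG * (1 + 2 ^ q * (((‖x‖ + 1) + δ * (Cb * (3 + ‖x‖ + K))) ^ q +
        (1 + ∫ ω, ‖Z ω‖ ^ p ∂P))) := by
    intro n
    have hmono := hanmin n 0 hA0
    have hL1 : cL * (‖astar (xs n) (μs n) (ms n)‖ ^ p - 1) * δ ≤
        L (xs n) (astar (xs n) (μs n) (ms n)) (μs n) * δ :=
      mul_le_mul_of_nonneg_right (hL_lower (xs n) _ (μs n) (hanA n) (hμs n)) hδ.le
    have hI1 : -CG ≤ ∫ ω, G (xs n + δ • b (xs n) (astar (xs n) (μs n) (ms n)) (μs n) + Z ω)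
        (ms n) ∂P := hInt_lb _ _ (hms n) (hmsK n)
    have hL2 : L (xs n) 0 (μs n) ≤ CL * (1 + (‖x‖ + 1) ^ q + (1 + K)) := by
      have h := hL_zero (xs n) (μs n) (hμs n)
      have hxq : ‖xs n‖ ^ q ≤ (‖x‖ + 1) ^ q :=
        Real.rpow_le_rpow (norm_nonneg _) (hxsb n) hq0
      have hmq := hmomq n
      refine h.trans ?_
      nlinarith
    have hI2 := hInt_ub _ _ _ hc0nn (hvbd n) (hms n) (hmsK n)
    have hL2' := mul_le_mul_of_nonneg_right hL2 hδ.le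
    linarith
  -- uniform bound R on the minimizers
  set Rp : ℝ := (CL * (1 + (‖x‖ + 1) ^ q + (1 + K)) * δ +
      CG * (1 + 2 ^ q * (((‖x‖ + 1) + δ * (Cb * (3 + ‖x‖ + K))) ^ q +
        (1 + ∫ ω, ‖Z ω‖ ^ p ∂P))) + CG + cL * δ) / (cL * δ) with hRp
  have hasp : ∀ n, ‖astar (xs n) (μs n) (ms n)‖ ^ p ≤ Rp := by
    intro n
    rw [hRp, le_div_iff₀ (mul_pos hcL hδ)]
    have h := hkey n
    nlinarith
  have hasR : ∀ n, ‖astar (xs n) (μs n) (ms n)‖ ≤ max 1 Rp := by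
    intro n
    rcases le_total ‖astar (xs n) (μs n) (ms n)‖ 1 with h | h
    · exact h.trans (le_max_left _ _)
    · have h2 := Real.rpow_le_rpow_of_exponent_le h hp.le
      rw [Real.rpow_one] at h2
      exact h2.trans ((hasp n).trans (le_max_right _ _))
  -- compactness and subsequence extraction
  have hScompact : IsCompact (A ∩ Metric.closedBall (0 : Vec d) (max 1 Rp)) :=
    (isCompact_closedBall (0 : Vec d) (max 1 Rp)).inter_left hA_closed
  have hmemS : ∀ n, astar (xs n) (μs n) (ms n) ∈ A ∩ Metric.closedBall (0 : Vec d) (max 1 Rp) :=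
    fun n => ⟨hanA n, by rw [Metric.mem_closedBall, dist_zero_right]; exact hasR n⟩
  obtain ⟨abar, habarS, φ, hφ, hconv⟩ := hScompact.tendsto_subseq hmemS
  have habarA : abar ∈ A := habarS.1
  -- convergence of the parameters
  have hd1 : Tendsto (fun n => dist x (xs n)) atTop (𝓝 0) :=
    squeeze_zero (fun n => dist_nonneg) (fun n => (hcomp n).1)
      tendsto_one_div_add_atTop_nhds_zero_nat
  have hd2 : Tendsto (fun n => MFG.W1 μ (μs n)) atTop (𝓝 0) :=
    squeeze_zero (fun n => W1_nonneg _ _) (fun n => (hcomp n).2.1)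
      tendsto_one_div_add_atTop_nhds_zero_nat
  have hd3 : Tendsto (fun n => MFG.W1 m (ms n)) atTop (𝓝 0) :=
    squeeze_zero (fun n => W1_nonneg _ _) (fun n => (hcomp n).2.2)
      tendsto_one_div_add_atTop_nhds_zero_nat
  have hφd1 : Tendsto (fun n => dist x (xs (φ n))) atTop (𝓝 0) := hd1.comp hφ.tendsto_atTop
  have hφd2 : Tendsto (fun n => MFG.W1 μ (μs (φ n))) atTop (𝓝 0) := hd2.comp hφ.tendsto_atTop
  have hφd3 : Tendsto (fun n => MFG.W1 m (ms (φ n))) atTop (𝓝 0) := hd3.comp hφ.tendsto_atTop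
  have hxφ : Tendsto (fun n => xs (φ n)) atTop (𝓝 x) := by
    rw [tendsto_iff_dist_tendsto_zero]
    simpa [dist_comm] using hφd1
  -- sequential continuity of L along the subsequence
  have hLt : ∀ (a' : Vec d) (an : ℕ → Vec d), a' ∈ A → (∀ n, an n ∈ A) →
      Tendsto an atTop (𝓝 a') →
      Tendsto (fun n => L (xs (φ n)) (an n) (μs (φ n))) atTop (𝓝 (L x a' μ)) := by
    intro a' an ha' hanA' ht
    rw [Metric.tendsto_atTop]
    intro ε' hε'
    obtain ⟨η, hη, hcl⟩ := hL_cont x a' μ ha' hμ hμK ε' hε'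
    have hda : Tendsto (fun n => dist a' (an n)) atTop (𝓝 0) := by
      simpa [dist_comm] using tendsto_iff_dist_tendsto_zero.mp ht
    have hsum : Tendsto (fun n => dist x (xs (φ n)) + dist a' (an n) +
        MFG.W1 μ (μs (φ n))) atTop (𝓝 0) := by
      simpa using (hφd1.add hda).add hφd2
    obtain ⟨N, hN⟩ := eventually_atTop.mp (hsum.eventually (gt_mem_nhds hη))
    refine ⟨N, fun n hn => ?_⟩
    rw [Real.dist_eq, abs_sub_comm]
    exact hcl (xs (φ n)) (an n) (μs (φ n)) (hanA' n) (hμs (φ n)) (hμsK (φ n)) (hN n hn)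
  -- sequential continuity of b along the subsequence
  have hbt : ∀ (a' : Vec d) (an : ℕ → Vec d), a' ∈ A → (∀ n, an n ∈ A) →
      Tendsto an atTop (𝓝 a') →
      Tendsto (fun n => b (xs (φ n)) (an n) (μs (φ n))) atTop (𝓝 (b x a' μ)) := by
    intro a' an ha' hanA' ht
    rw [Metric.tendsto_atTop]
    intro ε' hε'
    obtain ⟨η, hη, hcl⟩ := hb_cont x a' μ ha' hμ hμK ε' hε'
    have hda : Tendsto (fun n => dist a' (an n)) atTop (𝓝 0) := by
      simpa [dist_comm] using tendsto_iff_dist_tendsto_zero.mp ht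
    have hsum : Tendsto (fun n => dist x (xs (φ n)) + dist a' (an n) +
        MFG.W1 μ (μs (φ n))) atTop (𝓝 0) := by
      simpa using (hφd1.add hda).add hφd2
    obtain ⟨N, hN⟩ := eventually_atTop.mp (hsum.eventually (gt_mem_nhds hη))
    refine ⟨N, fun n hn => ?_⟩
    rw [dist_eq_norm, norm_sub_rev]
    exact hcl (xs (φ n)) (an n) (μs (φ n)) (hanA' n) (hμs (φ n)) (hμsK (φ n)) (hN n hn)
  -- sequential continuity of the G-integral along the subsequence
  have hGt : ∀ (a' : Vec d) (an : ℕ → Vec d), a' ∈ A → (∀ n, an n ∈ A) →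
      Tendsto an atTop (𝓝 a') →
      Tendsto (fun n => ∫ ω, G (xs (φ n) + δ • b (xs (φ n)) (an n) (μs (φ n)) + Z ω)
        (ms (φ n)) ∂P) atTop (𝓝 (∫ ω, G (x + δ • b x a' μ + Z ω) m ∂P)) := by
    intro a' an ha' hanA' ht
    have hbt' := hbt a' an ha' hanA' ht
    have hvt : Tendsto (fun n => xs (φ n) + δ • b (xs (φ n)) (an n) (μs (φ n))) atTop
        (𝓝 (x + δ • b x a' μ)) := hxφ.add (hbt'.const_smul δ)
    have hev : ∀ᶠ n in atTop,
        ‖xs (φ n) + δ • b (xs (φ n)) (an n) (μs (φ n))‖ ≤ ‖x + δ • b x a' μ‖ + 1 :=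
      (hvt.norm.eventually (gt_mem_nhds (lt_add_one ‖x + δ • b x a' μ‖))).mono
        fun n h => le_of_lt h
    refine tendsto_integral_filter_of_dominated_convergence
      (fun ω => CG * (1 + 2 ^ q * ((‖x + δ • b x a' μ‖ + 1) ^ q + (1 + ‖Z ω‖ ^ p))))
      ?_ ?_ (hbd_int _) ?_
    · exact Eventually.of_forall fun n =>
        ((hGcont' (ms (φ n)) (hms (φ n)) (hmsK (φ n))).measurable.comp
          (measurable_const.add hZmeas)).aestronglyMeasurable
    · refine hev.mono fun n hn => ae_of_all _ fun ω => ?_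
      rw [Real.norm_eq_abs]
      exact hGptbd (‖x + δ • b x a' μ‖ + 1) _ (ms (φ n)) (by positivity) hn (hms (φ n)) ω
    · refine ae_of_all _ fun ω => ?_
      rw [Metric.tendsto_atTop]
      intro ε' hε'
      obtain ⟨η, hη, hcl⟩ := hG_cont (x + δ • b x a' μ + Z ω) m hm hmK ε' hε'
      have h1 : Tendsto (fun n => dist (x + δ • b x a' μ + Z ω)
          (xs (φ n) + δ • b (xs (φ n)) (an n) (μs (φ n)) + Z ω)) atTop (𝓝 0) := by
        refine (tendsto_iff_dist_tendsto_zero.mp hvt).congr fun n => ?_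
        rw [dist_add_right]
        exact dist_comm _ _
      have hdist : Tendsto (fun n => dist (x + δ • b x a' μ + Z ω)
          (xs (φ n) + δ • b (xs (φ n)) (an n) (μs (φ n)) + Z ω) + MFG.W1 m (ms (φ n)))
          atTop (𝓝 0) := by simpa using h1.add hφd3
      obtain ⟨N, hN⟩ := eventually_atTop.mp (hdist.eventually (gt_mem_nhds hη))
      refine ⟨N, fun n hn => ?_⟩
      rw [Real.dist_eq, abs_sub_comm]
      exact hcl _ (ms (φ n)) (hms (φ n)) (hmsK (φ n)) (hN n hn)
  -- abar is a minimizer at (x, μ, m)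
  have habar_min : ∀ a' ∈ A,
      L x abar μ * δ + (∫ ω, G (x + δ • b x abar μ + Z ω) m ∂P) ≤
        L x a' μ * δ + ∫ ω, G (x + δ • b x a' μ + Z ω) m ∂P := by
    intro a' ha'
    have hlhs := ((hLt abar (fun n => astar (xs (φ n)) (μs (φ n)) (ms (φ n))) habarA
        (fun n => hanA (φ n)) hconv).mul_const δ).add
      (hGt abar (fun n => astar (xs (φ n)) (μs (φ n)) (ms (φ n))) habarA
        (fun n => hanA (φ n)) hconv)
    have hrhs := ((hLt a' (fun _ => a') ha' (fun _ => ha') tendsto_const_nhds).mul_const δ).add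
      (hGt a' (fun _ => a') ha' (fun _ => ha') tendsto_const_nhds)
    exact le_of_tendsto_of_tendsto' hlhs hrhs fun n => hanmin (φ n) a' ha'
  obtain ⟨a0, -, hu⟩ := hmin x μ m hμ hm
  have heq : astar x μ m = abar :=
    (hu _ (hastar x μ m hμ hm)).trans (hu abar ⟨habarA, habar_min⟩).symm
  have hlim : Tendsto (fun n => ‖astar x μ m - astar (xs (φ n)) (μs (φ n)) (ms (φ n))‖)
      atTop (𝓝 0) := by
    have h := tendsto_iff_dist_tendsto_zero.mp hconv
    simpa [heq, dist_eq_norm, norm_sub_rev] using h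
  obtain ⟨n, hn⟩ := (hlim.eventually (gt_mem_nhds hε)).exists
  exact absurd (hfar (φ n)) (not_le.mpr hn)
end
end

section
/- If the terminal cost G is Lasry-Lions monotone, then the single-period mean field game admits at most one mean field equilibrium: if (α¹,m¹) and (α²,m²) are both MFEs, then α¹ = α² P-almost surely and m¹ = m². -/
open MeasureTheory ProbabilityTheory Filter
open scoped ENNReal NNReal BigOperators RealInnerProductSpace

noncomputable section

namespace MFG

variable {d : ℕ}

variable {Ω : Type*} [MeasurableSpace Ω]

/-- Admissible controls of the single-period game: `σ(ξ)`-measurable, `p`-integrable,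
`A`-valued random variables. -/
def AdmS (P : Measure Ω) (p : ℝ) (A : Set (Vec d)) (ξ : Ω → Vec d) (α : Ω → Vec d) : Prop :=
  Measurable[MeasurableSpace.comap ξ inferInstance] α ∧ (∀ ω, α ω ∈ A) ∧
    Integrable (fun ω => ‖α ω‖ ^ p) P

/-- Controlled state of the single-period game: `X^α = ξ + b(ξ,α,m_ξ) δ + Z`. -/
def stateS (P : Measure Ω) (δ : ℝ) (b : Vec d → Vec d → Measure (Vec d) → Vec d)
    (ξ Z : Ω → Vec d) (α : Ω → Vec d) (ω : Ω) : Vec d :=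
  ξ ω + δ • b (ξ ω) (α ω) (P.map ξ) + Z ω

/-- Cost of the single-period game: `J_m(α) = E[ L(ξ,α,m_ξ) δ + G(X^α, m) ]`. -/
def JS (P : Measure Ω) (δ : ℝ) (b : Vec d → Vec d → Measure (Vec d) → Vec d)
    (L : Vec d → Vec d → Measure (Vec d) → ℝ) (G : Vec d → Measure (Vec d) → ℝ)
    (ξ Z : Ω → Vec d) (m : Measure (Vec d)) (α : Ω → Vec d) : ℝ :=
  ∫ ω, (L (ξ ω) (α ω) (P.map ξ) * δ + G (stateS P δ b ξ Z α ω) m) ∂P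

/-- Mean field equilibrium of the single-period game. -/
def IsMFES (P : Measure Ω) (p δ : ℝ) (A : Set (Vec d))
    (b : Vec d → Vec d → Measure (Vec d) → Vec d)
    (L : Vec d → Vec d → Measure (Vec d) → ℝ) (G : Vec d → Measure (Vec d) → ℝ)
    (ξ Z : Ω → Vec d) (α : Ω → Vec d) (m : Measure (Vec d)) : Prop :=
  AdmS P p A ξ α ∧ MemPp p m ∧
    (∀ β, AdmS P p A ξ β → JS P δ b L G ξ Z m α ≤ JS P δ b L G ξ Z m β) ∧
    P.map (stateS P δ b ξ Z α) = m

end MFG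

/-- Proposition 2.5. If the terminal cost `G` is Lasry-Lions monotone, then
the single-period mean field game admits at most one mean field equilibrium: if `(α¹,m¹)` and
`(α²,m²)` are both MFEs, then `α¹ = α²` P-a.s. and `m¹ = m²`. -/
theorem single_period_MFE_unique_of_LasryLions
    {d : ℕ} {Ω : Type*} [MeasurableSpace Ω] (P : Measure Ω) [IsProbabilityMeasure P]
    (p δ : ℝ) (hp : 1 < p) (hδ : 0 < δ)
    (A : Set (Vec d)) (hA_closed : IsClosed A) (hA_conv : Convex ℝ A) (hA0 : (0 : Vec d) ∈ A)
    (b : Vec d → Vec d → Measure (Vec d) → Vec d)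
    (L : Vec d → Vec d → Measure (Vec d) → ℝ)
    (G : Vec d → Measure (Vec d) → ℝ)
    (ξ Z : Ω → Vec d) (hξmeas : Measurable ξ) (hZmeas : Measurable Z)
    (hindep : IndepFun ξ Z P)
    (hξp : Integrable (fun ω => ‖ξ ω‖ ^ p) P) (hZp : Integrable (fun ω => ‖Z ω‖ ^ p) P)
    -- regularity: joint measurability of the coefficients in `(x,a)`
    (hbmeas : ∀ μ, Measurable fun xa : Vec d × Vec d => b xa.1 xa.2 μ)
    (hLmeas : ∀ μ : Measure (Vec d), Measurable fun xa : Vec d × Vec d => L xa.1 xa.2 μ)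
    (hGmeas : ∀ m, Measurable fun x => G x m)
    -- integrability of the running and terminal cost along admissible controls
    (hLint : ∀ (α : Ω → Vec d) (m : Measure (Vec d)), MFG.AdmS P p A ξ α → MFG.MemPp p m →
      Integrable (fun ω => L (ξ ω) (α ω) (P.map ξ)) P)
    (hGint : ∀ (α : Ω → Vec d) (m m' : Measure (Vec d)), MFG.AdmS P p A ξ α → MFG.MemPp p m → MFG.MemPp p m' →
      Integrable (fun ω => G (MFG.stateS P δ b ξ Z α ω) m') P)
    -- for every `m`, minimizers of `J_m` over `A_S(ξ)` are P-a.s. unique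
    (hminUnique : ∀ m : Measure (Vec d), MFG.MemPp p m → ∀ α β, MFG.AdmS P p A ξ α → MFG.AdmS P p A ξ β →
      (∀ γ, MFG.AdmS P p A ξ γ → MFG.JS P δ b L G ξ Z m α ≤ MFG.JS P δ b L G ξ Z m γ) →
      (∀ γ, MFG.AdmS P p A ξ γ → MFG.JS P δ b L G ξ Z m β ≤ MFG.JS P δ b L G ξ Z m γ) →
      α =ᵐ[P] β)
    -- Lasry-Lions monotonicity of `G`
    (hG_LL : ∀ m₁ m₂ : Measure (Vec d), MFG.MemPp p m₁ → MFG.MemPp p m₂ →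
      0 ≤ (∫ x, (G x m₁ - G x m₂) ∂m₁) - ∫ x, (G x m₁ - G x m₂) ∂m₂)
    -- two mean field equilibria
    (α₁ α₂ : Ω → Vec d) (m₁ m₂ : Measure (Vec d))
    (h₁ : MFG.IsMFES P p δ A b L G ξ Z α₁ m₁)
    (h₂ : MFG.IsMFES P p δ A b L G ξ Z α₂ m₂) :
    α₁ =ᵐ[P] α₂ ∧ m₁ = m₂ := by
  obtain ⟨hadm₁, hm₁, hopt₁, hmap₁⟩ := h₁
  obtain ⟨hadm₂, hm₂, hopt₂, hmap₂⟩ := h₂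
  -- measurability of controls and states
  have hα₁meas : Measurable α₁ := hadm₁.1.mono hξmeas.comap_le le_rfl
  have hα₂meas : Measurable α₂ := hadm₂.1.mono hξmeas.comap_le le_rfl
  have hSmeas : ∀ (α : Ω → Vec d), Measurable α → Measurable (MFG.stateS P δ b ξ Z α) := by
    intro α hα
    exact (hξmeas.add (((hbmeas (P.map ξ)).comp (hξmeas.prodMk hα)).const_smul δ)).add hZmeas
  have hS₁ : Measurable (MFG.stateS P δ b ξ Z α₁) := hSmeas α₁ hα₁meas
  have hS₂ : Measurable (MFG.stateS P δ b ξ Z α₂) := hSmeas α₂ hα₂meas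
  -- splitting of the cost
  have hJS : ∀ (α : Ω → Vec d), Measurable α → MFG.AdmS P p A ξ α →
      ∀ m, MFG.MemPp p m →
      MFG.JS P δ b L G ξ Z m α =
        (∫ ω, L (ξ ω) (α ω) (P.map ξ) * δ ∂P) +
          ∫ x, G x m ∂(P.map (MFG.stateS P δ b ξ Z α)) := by
    intro α hα hadm m hm
    unfold MFG.JS
    rw [integral_add ((hLint α m hadm hm).mul_const δ) (hGint α m m hadm hm hm),
      integral_map (hSmeas α hα).aemeasurable (hGmeas m).aestronglyMeasurable]
  -- integrability of terminal costs against the equilibrium measures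
  have hGi : ∀ (α : Ω → Vec d) (m m' : Measure (Vec d)), Measurable α →
      MFG.AdmS P p A ξ α → MFG.MemPp p m → MFG.MemPp p m' →
      Integrable (fun x => G x m') (P.map (MFG.stateS P δ b ξ Z α)) := by
    intro α m m' hα hadm hm hm'
    exact (integrable_map_measure (hGmeas m').aestronglyMeasurable
      (hSmeas α hα).aemeasurable).mpr (hGint α m m' hadm hm hm')
  set a := ∫ x, G x m₁ ∂m₁ with ha
  set bb := ∫ x, G x m₂ ∂m₁ with hb
  set c := ∫ x, G x m₁ ∂m₂ with hc
  set e := ∫ x, G x m₂ ∂m₂ with he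
  have hsplit₁ : ∫ x, (G x m₁ - G x m₂) ∂m₁ = a - bb := by
    rw [ha, hb, ← integral_sub]
    · have h := hGi α₁ m₁ m₁ hα₁meas hadm₁ hm₁ hm₁; rwa [hmap₁] at h
    · have h := hGi α₁ m₁ m₂ hα₁meas hadm₁ hm₁ hm₂; rwa [hmap₁] at h
  have hsplit₂ : ∫ x, (G x m₁ - G x m₂) ∂m₂ = c - e := by
    rw [hc, he, ← integral_sub]
    · have h := hGi α₂ m₂ m₁ hα₂meas hadm₂ hm₂ hm₁; rwa [hmap₂] at h
    · have h := hGi α₂ m₂ m₂ hα₂meas hadm₂ hm₂ hm₂; rwa [hmap₂] at h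
  have hLL : 0 ≤ (a - bb) - (c - e) := by
    have := hG_LL m₁ m₂ hm₁ hm₂
    rwa [hsplit₁, hsplit₂] at this
  set C₁ := ∫ ω, L (ξ ω) (α₁ ω) (P.map ξ) * δ ∂P with hC₁
  set C₂ := ∫ ω, L (ξ ω) (α₂ ω) (P.map ξ) * δ ∂P with hC₂
  have hJ11 : MFG.JS P δ b L G ξ Z m₁ α₁ = C₁ + a := by
    rw [hJS α₁ hα₁meas hadm₁ m₁ hm₁, hmap₁]
  have hJ21 : MFG.JS P δ b L G ξ Z m₂ α₁ = C₁ + bb := by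
    rw [hJS α₁ hα₁meas hadm₁ m₂ hm₂, hmap₁]
  have hJ12 : MFG.JS P δ b L G ξ Z m₁ α₂ = C₂ + c := by
    rw [hJS α₂ hα₂meas hadm₂ m₁ hm₁, hmap₂]
  have hJ22 : MFG.JS P δ b L G ξ Z m₂ α₂ = C₂ + e := by
    rw [hJS α₂ hα₂meas hadm₂ m₂ hm₂, hmap₂]
  have e₁ : MFG.JS P δ b L G ξ Z m₁ α₁ ≤ MFG.JS P δ b L G ξ Z m₁ α₂ := hopt₁ α₂ hadm₂
  have e₂ : MFG.JS P δ b L G ξ Z m₂ α₂ ≤ MFG.JS P δ b L G ξ Z m₂ α₁ := hopt₂ α₁ hadm₁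
  rw [hJ11, hJ12] at e₁
  rw [hJ22, hJ21] at e₂
  -- equality of the optimal values for J_{m₁}
  have hJeq : MFG.JS P δ b L G ξ Z m₁ α₂ = MFG.JS P δ b L G ξ Z m₁ α₁ := by
    rw [hJ11, hJ12]; linarith
  have hαae : α₁ =ᵐ[P] α₂ :=
    hminUnique m₁ hm₁ α₁ α₂ hadm₁ hadm₂ hopt₁
      (fun γ hγ => hJeq ▸ hopt₁ γ hγ)
  refine ⟨hαae, ?_⟩
  have hSae : MFG.stateS P δ b ξ Z α₁ =ᵐ[P] MFG.stateS P δ b ξ Z α₂ := by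
    filter_upwards [hαae] with ω hω
    simp [MFG.stateS, hω]
  rw [← hmap₁, ← hmap₂]
  exact Measure.map_congr hSae
end
end

section
/- In the single-period linear-quadratic mean field game in dimension 1 with δ = 1, drift b(x,a,m) = a, cost J_m(α) := E[ |X^α − m̄|² + c_L|ξ − E[ξ]|² + c α² ] where X^α = ξ + α + Z and m̄ := ∫ x m(dx), with constants c > 0, c_L > 0, ξ square integrable and Z independent of ξ with E[Z] = 0 and E[Z²] < ∞, the unique mean field equilibrium is (α̂, m̂) with m̂ := law( (c/(1+c))ξ + (1/(1+c))E[ξ] + Z ) and α̂ := (E[ξ] − ξ)/(1+c). -/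
open MeasureTheory ProbabilityTheory Filter
open scoped ENNReal NNReal BigOperators

noncomputable section

namespace LQ1

variable {Ω : Type*} [MeasurableSpace Ω]

/-- Admissible controls: `σ(ξ)`-measurable square-integrable real random variables. -/
def Adm (P : Measure Ω) (ξ α : Ω → ℝ) : Prop :=
  Measurable[MeasurableSpace.comap ξ inferInstance] α ∧ MemLp α 2 P

/-- Controlled state `X^α = ξ + α + Z`. -/
def X (ξ Z α : Ω → ℝ) (ω : Ω) : ℝ := ξ ω + α ω + Z ω

/-- Mean of a measure on `ℝ`. -/
def mean (m : Measure ℝ) : ℝ := ∫ x, x ∂m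

/-- Cost `J_m(α) = E[ |X^α − m̄|² + c_L |ξ − E ξ|² + c α² ]`. -/
def J (P : Measure Ω) (c cL : ℝ) (ξ Z : Ω → ℝ) (m : Measure ℝ) (α : Ω → ℝ) : ℝ :=
  ∫ ω, ((X ξ Z α ω - mean m) ^ 2 + cL * (ξ ω - ∫ ω', ξ ω' ∂P) ^ 2 + c * α ω ^ 2) ∂P

/-- Mean field equilibrium of the single-period linear-quadratic game. -/
def IsMFE (P : Measure Ω) (c cL : ℝ) (ξ Z : Ω → ℝ) (α : Ω → ℝ) (m : Measure ℝ) : Prop :=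
  Adm P ξ α ∧ (∀ β, Adm P ξ β → J P c cL ξ Z m α ≤ J P c cL ξ Z m β) ∧
    P.map (X ξ Z α) = m

end LQ1

/-!
Completing the square, and killing the cross term `E[(ξ + α - m̄) Z]` by independence, gives
`J_m(α) = J_m(α*) + (1 + c) E[(α - α*)²]` with `α* = (m̄ - ξ) / (1 + c)`, so `α*` is the
unique optimal control against `m`. Taking expectations in `X^{α*} = ξ + α* + Z`, the
consistency condition `m̄ = E[X^{α*}]` reads `m̄ = E[ξ] + (m̄ - E[ξ]) / (1 + c)`, whose only
solution is `m̄ = E[ξ]`.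
-/

namespace LQ1

lemma indepFun_of_measurable_comap {Ω β γ δ : Type*} {_ : MeasurableSpace Ω}
    [mβ : MeasurableSpace β] [MeasurableSpace γ] [MeasurableSpace δ] {μ : Measure Ω}
    {ξ : Ω → β} {Z : Ω → γ} {f : Ω → δ} (hindep : IndepFun ξ Z μ)
    (hf : Measurable[mβ.comap ξ] f) : IndepFun f Z μ :=
  (IndepFun_iff_Indep _ _ _).2 <|
    indep_of_indep_of_le_left ((IndepFun_iff_Indep _ _ _).1 hindep) hf.comap_le

lemma mean_map {Ω : Type*} [MeasurableSpace Ω] {P : Measure Ω} {f : Ω → ℝ}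
    (hf : AEMeasurable f P) : mean (P.map f) = ∫ ω, f ω ∂P :=
  integral_map hf aestronglyMeasurable_id

variable {Ω : Type*} [MeasurableSpace Ω] {P : Measure Ω} {c cL : ℝ} {ξ Z : Ω → ℝ}

def bestResponse (c : ℝ) (ξ : Ω → ℝ) (M : ℝ) (ω : Ω) : ℝ := (M - ξ ω) / (1 + c)

lemma adm_bestResponse [IsFiniteMeasure P] (hξ2 : MemLp ξ 2 P) (M : ℝ) :
    Adm P ξ (bestResponse c ξ M) :=
  ⟨(measurable_const.sub (comap_measurable ξ)).div_const _,
    ((memLp_const M).sub hξ2).mul_const (1 + c)⁻¹⟩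

lemma integral_bestResponse [IsProbabilityMeasure P] (hξ2 : MemLp ξ 2 P) (M : ℝ) :
    ∫ ω, bestResponse c ξ M ω ∂P = (M - ∫ ω, ξ ω ∂P) / (1 + c) := by
  simp only [bestResponse]
  rw [integral_div, integral_sub (integrable_const M) (hξ2.integrable one_le_two),
    integral_const, probReal_univ, one_smul]

lemma cost_integrand_eq (hc : 1 + c ≠ 0) (x a z M μ : ℝ) :
    (x + a + z - M) ^ 2 + cL * (x - μ) ^ 2 + c * a ^ 2
      = (1 + c) * (a - (M - x) / (1 + c)) ^ 2
        + (c / (1 + c) * (x - M) ^ 2 + cL * (x - μ) ^ 2 + z ^ 2) + 2 * ((x + a - M) * z) := by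
  field_simp
  ring

lemma J_eq_integral_sq_add [IsProbabilityMeasure P] (hc : 0 < c) (hindep : IndepFun ξ Z P)
    (hξ2 : MemLp ξ 2 P) (hZ2 : MemLp Z 2 P) (hZmean : ∫ ω, Z ω ∂P = 0)
    (m : Measure ℝ) {α : Ω → ℝ} (hα : Adm P ξ α) :
    J P c cL ξ Z m α
      = (1 + c) * ∫ ω, (α ω - bestResponse c ξ (mean m) ω) ^ 2 ∂P
        + ∫ ω, (c / (1 + c) * (ξ ω - mean m) ^ 2 + cL * (ξ ω - ∫ ω', ξ ω' ∂P) ^ 2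
          + Z ω ^ 2) ∂P := by
  simp only [J, X, bestResponse, cost_integrand_eq (by positivity : 1 + c ≠ 0)]
  set M := mean m
  set μ₀ := ∫ ω', ξ ω' ∂P
  have hf2 : MemLp (fun ω => ξ ω + α ω - M) 2 P := (hξ2.add hα.2).sub (memLp_const M)
  have hcross : ∫ ω, (ξ ω + α ω - M) * Z ω ∂P = 0 := by
    have hindep' : IndepFun (fun ω => ξ ω + α ω - M) Z P :=
      indepFun_of_measurable_comap hindep
        (((comap_measurable ξ).add hα.1).sub measurable_const)
    rw [hindep'.integral_fun_mul_eq_mul_integral hf2.aestronglyMeasurable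
      hZ2.aestronglyMeasurable, hZmean, mul_zero]
  have hsq : Integrable (fun ω => (α ω - (M - ξ ω) / (1 + c)) ^ 2) P :=
    (hα.2.sub (adm_bestResponse hξ2 M).2).integrable_sq
  have hrest : Integrable (fun ω => c / (1 + c) * (ξ ω - M) ^ 2
      + cL * (ξ ω - μ₀) ^ 2 + Z ω ^ 2) P :=
    ((((hξ2.sub (memLp_const M)).integrable_sq).const_mul _).add
      (((hξ2.sub (memLp_const μ₀)).integrable_sq).const_mul _)).add hZ2.integrable_sq
  have hprod : Integrable (fun ω => (ξ ω + α ω - M) * Z ω) P := hf2.integrable_mul hZ2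
  rw [integral_add (by exact (hsq.const_mul _).add hrest) (hprod.const_mul _),
    integral_add (hsq.const_mul _) hrest, integral_const_mul, integral_const_mul, hcross,
    mul_zero, add_zero]

lemma J_eq_J_bestResponse_add [IsProbabilityMeasure P] (hc : 0 < c) (hindep : IndepFun ξ Z P)
    (hξ2 : MemLp ξ 2 P) (hZ2 : MemLp Z 2 P) (hZmean : ∫ ω, Z ω ∂P = 0)
    (m : Measure ℝ) {α : Ω → ℝ} (hα : Adm P ξ α) :
    J P c cL ξ Z m α = J P c cL ξ Z m (bestResponse c ξ (mean m))
      + (1 + c) * ∫ ω, (α ω - bestResponse c ξ (mean m) ω) ^ 2 ∂P := by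
  rw [J_eq_integral_sq_add hc hindep hξ2 hZ2 hZmean m hα,
    J_eq_integral_sq_add hc hindep hξ2 hZ2 hZmean m (adm_bestResponse hξ2 _)]
  simp only [sub_self, zero_pow two_ne_zero, integral_zero, mul_zero, zero_add]
  ring

lemma J_bestResponse_le [IsProbabilityMeasure P] (hc : 0 < c) (hindep : IndepFun ξ Z P)
    (hξ2 : MemLp ξ 2 P) (hZ2 : MemLp Z 2 P) (hZmean : ∫ ω, Z ω ∂P = 0)
    (m : Measure ℝ) {β : Ω → ℝ} (hβ : Adm P ξ β) :
    J P c cL ξ Z m (bestResponse c ξ (mean m)) ≤ J P c cL ξ Z m β := by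
  rw [J_eq_J_bestResponse_add hc hindep hξ2 hZ2 hZmean m hβ]
  exact le_add_of_nonneg_right <|
    mul_nonneg (by positivity) (integral_nonneg fun ω => sq_nonneg _)

lemma ae_eq_bestResponse_of_J_le [IsProbabilityMeasure P] (hc : 0 < c)
    (hindep : IndepFun ξ Z P) (hξ2 : MemLp ξ 2 P) (hZ2 : MemLp Z 2 P)
    (hZmean : ∫ ω, Z ω ∂P = 0) (m : Measure ℝ) {α : Ω → ℝ} (hα : Adm P ξ α)
    (hle : J P c cL ξ Z m α ≤ J P c cL ξ Z m (bestResponse c ξ (mean m))) :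
    α =ᵐ[P] bestResponse c ξ (mean m) := by
  rw [J_eq_J_bestResponse_add hc hindep hξ2 hZ2 hZmean m hα] at hle
  have hnonneg : 0 ≤ ∫ ω, (α ω - bestResponse c ξ (mean m) ω) ^ 2 ∂P :=
    integral_nonneg fun ω => sq_nonneg _
  have hzero : ∫ ω, (α ω - bestResponse c ξ (mean m) ω) ^ 2 ∂P = 0 :=
    le_antisymm (nonpos_of_mul_nonpos_right (by linarith) (by positivity : (0 : ℝ) < 1 + c))
      hnonneg
  have hint : Integrable (fun ω => (α ω - bestResponse c ξ (mean m) ω) ^ 2) P :=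
    (hα.2.sub (adm_bestResponse hξ2 _).2).integrable_sq
  filter_upwards [(integral_eq_zero_iff_of_nonneg (fun ω => sq_nonneg _) hint).1 hzero]
    with ω hω
  exact sub_eq_zero.1 (pow_eq_zero_iff two_ne_zero |>.1 hω)

lemma mean_map_X [IsProbabilityMeasure P] (hξ2 : MemLp ξ 2 P) (hZ2 : MemLp Z 2 P)
    (hZmean : ∫ ω, Z ω ∂P = 0) {α : Ω → ℝ} (hα : Adm P ξ α) :
    mean (P.map (X ξ Z α)) = ∫ ω, ξ ω ∂P + ∫ ω, α ω ∂P := by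
  have hXα : MemLp (X ξ Z α) 2 P := (hξ2.add hα.2).add hZ2
  rw [mean_map hXα.aestronglyMeasurable.aemeasurable]
  simp only [X]
  rw [integral_add (by exact (hξ2.add hα.2).integrable one_le_two) (hZ2.integrable one_le_two),
    integral_add (hξ2.integrable one_le_two) (hα.2.integrable one_le_two), hZmean, add_zero]

lemma IsMFE.ae_eq_bestResponse [IsProbabilityMeasure P] (hc : 0 < c)
    (hindep : IndepFun ξ Z P) (hξ2 : MemLp ξ 2 P) (hZ2 : MemLp Z 2 P)
    (hZmean : ∫ ω, Z ω ∂P = 0) {α : Ω → ℝ} {m : Measure ℝ} (h : IsMFE P c cL ξ Z α m) :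
    α =ᵐ[P] bestResponse c ξ (mean m) :=
  ae_eq_bestResponse_of_J_le hc hindep hξ2 hZ2 hZmean m h.1
    (h.2.1 _ (adm_bestResponse hξ2 _))

lemma IsMFE.mean_eq [IsProbabilityMeasure P] (hc : 0 < c)
    (hindep : IndepFun ξ Z P) (hξ2 : MemLp ξ 2 P) (hZ2 : MemLp Z 2 P)
    (hZmean : ∫ ω, Z ω ∂P = 0) {α : Ω → ℝ} {m : Measure ℝ} (h : IsMFE P c cL ξ Z α m) :
    mean m = ∫ ω, ξ ω ∂P := by
  have hfix : mean m = ∫ ω, ξ ω ∂P + (mean m - ∫ ω, ξ ω ∂P) / (1 + c) := by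
    conv_lhs => rw [← h.2.2]
    rw [mean_map_X hξ2 hZ2 hZmean h.1,
      integral_congr_ae (h.ae_eq_bestResponse hc hindep hξ2 hZ2 hZmean),
      integral_bestResponse hξ2]
  have hcancel : c * (mean m - ∫ ω, ξ ω ∂P) = 0 := by
    field_simp at hfix
    linarith
  linarith [(mul_eq_zero.1 hcancel).resolve_left hc.ne']

end LQ1

open LQ1

theorem LQ_single_period_unique_MFE_general
    {Ω : Type*} [MeasurableSpace Ω] (P : Measure Ω) [IsProbabilityMeasure P]
    (c cL : ℝ) (hc : 0 < c)
    (ξ Z : Ω → ℝ) (hindep : IndepFun ξ Z P)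
    (hξ2 : MemLp ξ 2 P) (hZ2 : MemLp Z 2 P) (hZmean : (∫ ω, Z ω ∂P) = 0) :
    LQ1.IsMFE P c cL ξ Z
      (fun ω => ((∫ ω', ξ ω' ∂P) - ξ ω) / (1 + c))
      (P.map (fun ω => (c / (1 + c)) * ξ ω + (1 / (1 + c)) * (∫ ω', ξ ω' ∂P) + Z ω)) ∧
    ∀ (α : Ω → ℝ) (m : Measure ℝ), LQ1.IsMFE P c cL ξ Z α m →
      α =ᵐ[P] (fun ω => ((∫ ω', ξ ω' ∂P) - ξ ω) / (1 + c)) ∧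
      m = P.map (fun ω => (c / (1 + c)) * ξ ω + (1 / (1 + c)) * (∫ ω', ξ ω' ∂P) + Z ω) := by
  set μ := ∫ ω, ξ ω ∂P
  have hX : X ξ Z (bestResponse c ξ μ)
      = fun ω => (c / (1 + c)) * ξ ω + (1 / (1 + c)) * μ + Z ω := by
    funext ω
    simp only [X, bestResponse]
    field_simp
    ring
  have hmean : mean (P.map (X ξ Z (bestResponse c ξ μ))) = μ := by
    rw [mean_map_X hξ2 hZ2 hZmean (adm_bestResponse hξ2 μ), integral_bestResponse hξ2]
    simp [μ]
  refine ⟨⟨adm_bestResponse hξ2 μ, fun β hβ => ?_, hX ▸ rfl⟩, fun α m hMFE => ?_⟩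
  · rw [← hX]
    have hopt := J_bestResponse_le (cL := cL) hc hindep hξ2 hZ2 hZmean
      (P.map (X ξ Z (bestResponse c ξ μ))) hβ
    rwa [hmean] at hopt
  · have hα : α =ᵐ[P] bestResponse c ξ μ := by
      simpa only [hMFE.mean_eq hc hindep hξ2 hZ2 hZmean]
        using hMFE.ae_eq_bestResponse hc hindep hξ2 hZ2 hZmean
    refine ⟨hα, ?_⟩
    rw [← hMFE.2.2, ← hX]
    exact Measure.map_congr (by filter_upwards [hα] with ω hω; simp only [X, hω])

/-- Section 2.3.1. In the single-period linear-quadratic mean field game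
(`d = 1`, `δ = 1`, `b(x,a,m) = a`), the pair `(α̂, m̂)` with
`m̂ = law( (c/(1+c)) ξ + (1/(1+c)) E[ξ] + Z )` and `α̂ = (E[ξ] − ξ)/(1+c)` is the unique
mean field equilibrium. -/
theorem LQ_single_period_unique_MFE
    {Ω : Type*} [MeasurableSpace Ω] (P : Measure Ω) [IsProbabilityMeasure P]
    (c cL : ℝ) (hc : 0 < c) (hcL : 0 < cL)
    (ξ Z : Ω → ℝ) (hξ : Measurable ξ) (hZ : Measurable Z) (hindep : IndepFun ξ Z P)
    (hξ2 : MemLp ξ 2 P) (hZ2 : MemLp Z 2 P) (hZmean : (∫ ω, Z ω ∂P) = 0) :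
    LQ1.IsMFE P c cL ξ Z
      (fun ω => ((∫ ω', ξ ω' ∂P) - ξ ω) / (1 + c))
      (P.map (fun ω => (c / (1 + c)) * ξ ω + (1 / (1 + c)) * (∫ ω', ξ ω' ∂P) + Z ω)) ∧
    ∀ (α : Ω → ℝ) (m : Measure ℝ), LQ1.IsMFE P c cL ξ Z α m →
      α =ᵐ[P] (fun ω => ((∫ ω', ξ ω' ∂P) - ξ ω) / (1 + c)) ∧
      m = P.map (fun ω => (c / (1 + c)) * ξ ω + (1 / (1 + c)) * (∫ ω', ξ ω' ∂P) + Z ω) :=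
  LQ_single_period_unique_MFE_general P c cL hc ξ Z hindep hξ2 hZ2 hZmean
end
end
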